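/- As z → x_p = b with Im z > 0, ( D(z) − √(s_{p+1}) ) / √(z−b) converges to −2 √(s_{p+1}) d_{x_p} / √(b−a), where d_{x_p} = Σ_{j∈{0,…,m}∖{p−1,p}} β_j √(|x_j−a|)/√(|x_j−b|). Equivalently, D(z) = √(s_{p+1}) ( 1 − (2 d_{x_p}/√(b−a)) √(z−b) + O(z−b) ) as z → b in the upper half-plane. -/

import Mathlib

/-- The principal complex square root. -/
noncomputable def csqrt (w : ℂ) : ℂ := w ^ ((1 : ℂ) / 2)

/-- `β_j = (1/(2πi)) log(s_j/s_{j+1})`. -/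
noncomputable def betaCoef (s : ℕ → ℝ) (j : ℕ) : ℂ :=
  1 / (2 * ↑Real.pi * Complex.I) * ↑(Real.log (s j / s (j + 1)))

/-- `R_j(z)` for `0 ≤ j ≤ p−2` (so `x_j < a < b`). -/
noncomputable def Rlow (a b xj : ℝ) (z : ℂ) : ℂ :=
  (csqrt (z - ↑a) * ↑(Real.sqrt (b - xj)) - csqrt (z - ↑b) * ↑(Real.sqrt (a - xj))) /
  (csqrt (z - ↑a) * ↑(Real.sqrt (b - xj)) + csqrt (z - ↑b) * ↑(Real.sqrt (a - xj)))

/-- `R_j(z)` for `p+1 ≤ j ≤ m` (so `a < b < x_j`). -/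
noncomputable def Rhigh (a b xj : ℝ) (z : ℂ) : ℂ :=
  (csqrt (z - ↑b) * ↑(Real.sqrt (xj - a)) - csqrt (z - ↑a) * ↑(Real.sqrt (xj - b))) /
  (csqrt (z - ↑b) * ↑(Real.sqrt (xj - a)) + csqrt (z - ↑a) * ↑(Real.sqrt (xj - b)))

/-- The Szegő-type function `D` of the `s_p = 0` analysis:
`D(z) = ∏_{j=0}^{p−2} R_j(z)^{β_j} · ∏_{j=p+1}^m R_j(z)^{β_j}` for `Im z > 0`,
and the same product with exponents `−β_j` for `Im z < 0`. -/
noncomputable def szegoDGap (m p : ℕ) (x s : ℕ → ℝ) (z : ℂ) : ℂ :=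
  if 0 < z.im then
    (∏ j ∈ Finset.range (p - 1), Rlow (x (p - 1)) (x p) (x j) z ^ betaCoef s j) *
      (∏ j ∈ Finset.Icc (p + 1) m, Rhigh (x (p - 1)) (x p) (x j) z ^ betaCoef s j)
  else
    (∏ j ∈ Finset.range (p - 1), Rlow (x (p - 1)) (x p) (x j) z ^ (-betaCoef s j)) *
      (∏ j ∈ Finset.Icc (p + 1) m, Rhigh (x (p - 1)) (x p) (x j) z ^ (-betaCoef s j))

namespace SzegoGapAux

open Complex Filter Finset

lemma csqrt_sq {z : ℂ} (hz : z ≠ 0) : csqrt z ^ 2 = z := by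
  rw [csqrt, sq, ← Complex.cpow_add _ _ hz]; norm_num

lemma csqrt_eq_zero_iff {z : ℂ} : csqrt z = 0 ↔ z = 0 := by
  rw [csqrt, Complex.cpow_eq_zero_iff]; norm_num

lemma csqrt_ofReal_pos {t : ℝ} (ht : 0 < t) : csqrt (t : ℂ) = (Real.sqrt t : ℂ) := by
  rw [csqrt, show ((1:ℂ)/2) = ((1/2 : ℝ) : ℂ) by norm_num, ← Complex.ofReal_cpow ht.le,
    ← Real.sqrt_eq_rpow]

lemma arg_pos_of_im_pos {z : ℂ} (hz : 0 < z.im) : 0 < z.arg := by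
  rcases lt_or_eq_of_le (Complex.arg_nonneg_iff.mpr hz.le) with h | h
  · exact h
  · exact absurd (Complex.arg_eq_zero_iff.mp h.symm).2 hz.ne'

lemma arg_lt_pi_of_im_pos {z : ℂ} (hz : 0 < z.im) : z.arg < Real.pi := by
  rcases lt_or_eq_of_le (Complex.arg_le_pi z) with h | h
  · exact h
  · exact absurd (Complex.arg_eq_pi_iff.mp h).2 hz.ne'

lemma csqrt_im_arg {z : ℂ} (hz0 : z ≠ 0) :
    (csqrt z).re = Real.exp ((Complex.log z * (1/2)).re) * Real.cos (z.arg / 2) ∧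
    (csqrt z).im = Real.exp ((Complex.log z * (1/2)).re) * Real.sin (z.arg / 2) := by
  rw [csqrt, Complex.cpow_def_of_ne_zero hz0, Complex.exp_re, Complex.exp_im]
  have him : (Complex.log z * (1/2)).im = z.arg / 2 := by
    simp [Complex.mul_im, Complex.log_im]; ring
  rw [him]; exact ⟨rfl, rfl⟩

lemma csqrt_re_pos {z : ℂ} (hz : 0 < z.im) : 0 < (csqrt z).re := by
  have hz0 : z ≠ 0 := by intro h; simp [h] at hz
  rw [(csqrt_im_arg hz0).1]
  have h1 := arg_pos_of_im_pos hz
  have h2 := arg_lt_pi_of_im_pos hz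
  have := Real.pi_pos
  exact mul_pos (Real.exp_pos _)
    (Real.cos_pos_of_mem_Ioo ⟨by linarith, by linarith⟩)

lemma csqrt_im_pos {z : ℂ} (hz : 0 < z.im) : 0 < (csqrt z).im := by
  have hz0 : z ≠ 0 := by intro h; simp [h] at hz
  rw [(csqrt_im_arg hz0).2]
  have h1 := arg_pos_of_im_pos hz
  have h2 := arg_lt_pi_of_im_pos hz
  exact mul_pos (Real.exp_pos _)
    (Real.sin_pos_of_pos_of_lt_pi (by linarith) (by linarith))

lemma sub_ofReal_ne_zero {z : ℂ} (hz : 0 < z.im) (a : ℝ) : z - (a : ℂ) ≠ 0 :=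
  fun h' => by simpa [sub_eq_zero.mp h'] using hz.ne'

lemma aux_ne {a b : ℝ} (hab : a < b) {c d : ℝ} (hc : 0 < c) (hd : 0 ≤ d)
    {z : ℂ} (hz : 0 < z.im) (t : ℂ) (ht : t = 1 ∨ t = -1) :
    csqrt (z - (a : ℂ)) * (c : ℂ) + t * (csqrt (z - (b : ℂ)) * (d : ℂ)) ≠ 0 := by
  intro h
  have hza := sub_ofReal_ne_zero hz a
  have hzb := sub_ofReal_ne_zero hz b
  have ht2 : t ^ 2 = 1 := by rcases ht with h' | h' <;> (rw [h']; ring)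
  have h1 : csqrt (z - (a : ℂ)) * (c : ℂ) = -(t * (csqrt (z - (b : ℂ)) * (d : ℂ))) :=
    eq_neg_of_add_eq_zero_left h
  have e : (csqrt (z - (a:ℂ)) * (c:ℂ))^2 = (t * (csqrt (z - (b:ℂ)) * (d:ℂ)))^2 := by
    rw [h1]; ring
  have h2 : (z - (a : ℂ)) * ((c : ℂ))^2 = (z - (b : ℂ)) * ((d : ℂ))^2 := by
    calc (z - (a : ℂ)) * ((c : ℂ))^2 = csqrt (z - (a:ℂ))^2 * ((c:ℂ))^2 := by rw [csqrt_sq hza]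
    _ = (t * (csqrt (z - (b:ℂ)) * (d:ℂ)))^2 := by rw [← e]; ring
    _ = t^2 * (csqrt (z - (b:ℂ))^2 * ((d:ℂ))^2) := by ring
    _ = (z - (b : ℂ)) * ((d : ℂ))^2 := by rw [ht2, csqrt_sq hzb]; ring
  have h3 : z.im * c ^ 2 = z.im * d ^ 2 := by
    have := congrArg Complex.im h2
    simp only [Complex.mul_im, Complex.sub_im, Complex.sub_re, ← Complex.ofReal_pow,
      Complex.ofReal_im, Complex.ofReal_re, mul_zero, zero_add] at this
    simpa using this
  have hcd : c = d := by
    have : c ^ 2 = d ^ 2 := mul_left_cancel₀ hz.ne' h3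
    nlinarith
  have hc' : ((c : ℂ))^2 ≠ 0 := pow_ne_zero 2 (by exact_mod_cast hc.ne')
  have h4 := mul_right_cancel₀ hc' (h2.trans (by rw [hcd]))
  have : (a : ℂ) = (b : ℂ) := by linear_combination -h4
  exact hab.ne (by exact_mod_cast this)

lemma im_cross_pos {a b : ℝ} (hab : a < b) {z : ℂ} (hz : 0 < z.im) :
    0 < (csqrt (z - (b:ℂ))).im * (csqrt (z - (a:ℂ))).re
      - (csqrt (z - (b:ℂ))).re * (csqrt (z - (a:ℂ))).im := by
  set w := csqrt (z - (b:ℂ)) with hw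
  set q := csqrt (z - (a:ℂ)) with hq
  have hima : 0 < (z - (a:ℂ)).im := by simpa using hz
  have himb : 0 < (z - (b:ℂ)).im := by simpa using hz
  have hwre := csqrt_re_pos himb
  have hwim := csqrt_im_pos himb
  have hqre := csqrt_re_pos hima
  have hqim := csqrt_im_pos hima
  set u := w * (starRingEnd ℂ) q with hu
  have hure : 0 < u.re := by
    rw [hu]
    simp only [Complex.mul_re, Complex.conj_re, Complex.conj_im]
    nlinarith
  have husq : u ^ 2 = (z - (b:ℂ)) * (starRingEnd ℂ) (z - (a:ℂ)) := by
    rw [hu, mul_pow, ← map_pow, csqrt_sq (sub_ofReal_ne_zero hz b),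
      csqrt_sq (sub_ofReal_ne_zero hz a)]
  have him2 : (u ^ 2).im = z.im * (b - a) := by
    rw [husq]
    simp [Complex.mul_im, Complex.conj_re, Complex.conj_im]
    ring
  have huim : 0 < u.im := by
    have h2 : (u ^ 2).im = 2 * u.re * u.im := by
      rw [sq]; simp [Complex.mul_im]; ring
    nlinarith [him2, mul_pos hz (sub_pos.mpr hab)]
  have : u.im = w.im * q.re - w.re * q.im := by
    rw [hu]; simp [Complex.mul_im, Complex.conj_re, Complex.conj_im]; ring
  linarith [this ▸ huim]

noncomputable def gfun (K : ℂ) (c d : ℝ) (w : ℂ) : ℂ :=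
  (csqrt (w ^ 2 + K) * (c : ℂ) - w * (d : ℂ)) / (csqrt (w ^ 2 + K) * (c : ℂ) + w * (d : ℂ))

lemma sq_csqrt_add {a b : ℝ} {z : ℂ} (hz : 0 < z.im) :
    csqrt (z - (b:ℂ)) ^ 2 + ((b:ℂ) - (a:ℂ)) = z - (a:ℂ) := by
  rw [csqrt_sq (sub_ofReal_ne_zero hz b)]; ring

lemma gfun_eq {a b : ℝ} {z : ℂ} (hz : 0 < z.im) (c d : ℝ) :
    gfun ((b:ℂ) - (a:ℂ)) c d (csqrt (z - (b:ℂ))) =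
      (csqrt (z - (a:ℂ)) * (c : ℂ) - csqrt (z - (b:ℂ)) * (d : ℂ)) /
      (csqrt (z - (a:ℂ)) * (c : ℂ) + csqrt (z - (b:ℂ)) * (d : ℂ)) := by
  rw [gfun, sq_csqrt_add hz]

lemma denom_ne {a b : ℝ} (hab : a < b) {c d : ℝ} (hc : 0 < c) (hd : 0 ≤ d)
    {z : ℂ} (hz : 0 < z.im) :
    csqrt (z - (a : ℂ)) * (c : ℂ) + csqrt (z - (b : ℂ)) * (d : ℂ) ≠ 0 := by
  have := aux_ne hab hc hd hz 1 (Or.inl rfl)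
  simpa using this

lemma numer_ne {a b : ℝ} (hab : a < b) {c d : ℝ} (hc : 0 < c) (hd : 0 ≤ d)
    {z : ℂ} (hz : 0 < z.im) :
    csqrt (z - (a : ℂ)) * (c : ℂ) - csqrt (z - (b : ℂ)) * (d : ℂ) ≠ 0 := by
  have := aux_ne hab hc hd hz (-1) (Or.inr rfl)
  intro h; apply this; rw [← h]; ring

lemma gfun_ne {a b : ℝ} (hab : a < b) {c d : ℝ} (hc : 0 < c) (hd : 0 ≤ d)
    {z : ℂ} (hz : 0 < z.im) :
    gfun ((b:ℂ) - (a:ℂ)) c d (csqrt (z - (b:ℂ))) ≠ 0 := by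
  rw [gfun_eq hz]
  exact div_ne_zero (numer_ne hab hc hd hz) (denom_ne hab hc hd hz)

lemma gfun_im_neg {a b : ℝ} (hab : a < b) {c d : ℝ} (hc : 0 < c) (hd : 0 < d)
    {z : ℂ} (hz : 0 < z.im) :
    (gfun ((b:ℂ) - (a:ℂ)) c d (csqrt (z - (b:ℂ)))).im < 0 := by
  rw [gfun_eq hz]
  set q := csqrt (z - (a:ℂ))
  set w := csqrt (z - (b:ℂ))
  set n := q * (c:ℂ) - w * (d:ℂ) with hn
  set dd := q * (c:ℂ) + w * (d:ℂ) with hdd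
  have hdd0 : dd ≠ 0 := denom_ne hab hc hd.le hz
  have hns : 0 < Complex.normSq dd := Complex.normSq_pos.mpr hdd0
  rw [Complex.div_im, div_sub_div_same]
  apply div_neg_of_neg_of_pos _ hns
  have hX := im_cross_pos hab hz
  have hnim : n.im = q.im * c - w.im * d := by rw [hn]; simp [Complex.mul_im]
  have hnre : n.re = q.re * c - w.re * d := by rw [hn]; simp [Complex.mul_re]
  have hdim : dd.im = q.im * c + w.im * d := by rw [hdd]; simp [Complex.mul_im]
  have hdre : dd.re = q.re * c + w.re * d := by rw [hdd]; simp [Complex.mul_re]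
  rw [hnim, hnre, hdim, hdre]
  nlinarith [mul_pos (mul_pos hc hd) hX]

lemma log_neg_of_im_neg {x : ℂ} (hx : x.im < 0) :
    Complex.log (-x) = Complex.log x + (Real.pi : ℂ) * Complex.I := by
  have hx0 : x ≠ 0 := fun h => by simp [h] at hx
  apply Complex.ext
  · simp [Complex.log_re, Complex.add_re, Complex.mul_re]
  · simp only [Complex.log_im, Complex.add_im, Complex.mul_im, Complex.I_im, Complex.I_re,
      Complex.ofReal_re, Complex.ofReal_im, mul_one, mul_zero, zero_mul, add_zero, zero_add]
    exact Complex.arg_neg_eq_arg_add_pi_of_im_neg hx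

lemma sqrtba_ne {a b : ℝ} (hab : a < b) : ((Real.sqrt (b - a) : ℝ) : ℂ) ≠ 0 := by
  exact_mod_cast (Real.sqrt_pos.mpr (sub_pos.mpr hab)).ne'

lemma gfun_zero {a b : ℝ} (hab : a < b) {c : ℝ} (hc : 0 < c) (d : ℝ) :
    gfun ((b:ℂ) - (a:ℂ)) c d 0 = 1 := by
  have hK : (0:ℂ)^2 + ((b:ℂ) - (a:ℂ)) = ((b - a : ℝ) : ℂ) := by push_cast; ring
  rw [gfun, hK, csqrt_ofReal_pos (sub_pos.mpr hab)]
  rw [zero_mul, sub_zero, add_zero]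
  exact div_self (mul_ne_zero (sqrtba_ne hab) (by exact_mod_cast hc.ne'))

lemma gfun_log_hasDerivAt {a b : ℝ} (hab : a < b) {c : ℝ} (d : ℝ) (hc : 0 < c) :
    HasDerivAt (fun w => Complex.log (gfun ((b:ℂ) - (a:ℂ)) c d w))
      (-2 * (d:ℂ) / (((Real.sqrt (b - a) : ℝ) : ℂ) * (c:ℂ))) 0 := by
  set K : ℂ := (b:ℂ) - (a:ℂ) with hKdef
  have hK : (0:ℂ)^2 + K = ((b - a : ℝ) : ℂ) := by rw [hKdef]; push_cast; ring
  have hpoly : HasDerivAt (fun w : ℂ => w^2 + K) 0 0 := by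
    simpa using (hasDerivAt_pow 2 (0:ℂ)).add_const K
  have hKslit : ((fun w : ℂ => w^2 + K) 0) ∈ Complex.slitPlane := by
    simp only [hK]
    exact Complex.ofReal_mem_slitPlane.mpr (sub_pos.mpr hab)
  have hq : HasDerivAt (fun w : ℂ => csqrt (w^2 + K)) 0 0 := by
    have := hpoly.cpow_const (c := (1:ℂ)/2) hKslit
    simpa [csqrt] using this
  have q0 : csqrt ((0:ℂ)^2 + K) = ((Real.sqrt (b - a) : ℝ) : ℂ) := by
    rw [hK, csqrt_ofReal_pos (sub_pos.mpr hab)]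
  set S : ℂ := ((Real.sqrt (b - a) : ℝ) : ℂ) with hS
  have hnum : HasDerivAt (fun w : ℂ => csqrt (w^2 + K) * (c:ℂ) - w * (d:ℂ))
      (0 * (c:ℂ) - 1 * (d:ℂ)) 0 := (hq.mul_const _).sub ((hasDerivAt_id 0).mul_const _)
  have hden : HasDerivAt (fun w : ℂ => csqrt (w^2 + K) * (c:ℂ) + w * (d:ℂ))
      (0 * (c:ℂ) + 1 * (d:ℂ)) 0 := (hq.mul_const _).add ((hasDerivAt_id 0).mul_const _)
  have hc' : (c : ℂ) ≠ 0 := by exact_mod_cast hc.ne'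
  have hden0 : csqrt ((0:ℂ)^2 + K) * (c:ℂ) + 0 * (d:ℂ) ≠ 0 := by
    rw [q0, zero_mul, add_zero]
    exact mul_ne_zero (sqrtba_ne hab) hc'
  have hg : HasDerivAt (fun w => gfun K c d w)
      (((0 * (c:ℂ) - 1 * (d:ℂ)) * (csqrt ((0:ℂ)^2 + K) * (c:ℂ) + 0 * (d:ℂ)) -
        (csqrt ((0:ℂ)^2 + K) * (c:ℂ) - 0 * (d:ℂ)) * (0 * (c:ℂ) + 1 * (d:ℂ))) /
        (csqrt ((0:ℂ)^2 + K) * (c:ℂ) + 0 * (d:ℂ)) ^ 2) 0 := hnum.div hden hden0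
  have hg0slit : gfun K c d 0 ∈ Complex.slitPlane := by
    rw [hKdef, gfun_zero hab hc d]; exact Complex.one_mem_slitPlane
  have hlog := hg.clog hg0slit
  rw [hKdef, gfun_zero hab hc d, div_one] at hlog
  convert hlog using 1
  rw [q0]
  have hS0 : S ≠ 0 := sqrtba_ne hab
  field_simp
  ring

lemma xmono {m : ℕ} {x : ℕ → ℝ} (hx : ∀ j, j < m → x j < x (j + 1)) :
    ∀ i j, j ≤ m → i < j → x i < x j := by
  intro i j
  induction j with
  | zero => omega
  | succ n ih =>
    intro hj hij
    rcases Nat.lt_succ_iff_lt_or_eq.mp hij with h | h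
    · exact lt_trans (ih (by omega) h) (hx n (by omega))
    · exact h ▸ hx n (by omega)

lemma tele (f : ℕ → ℂ) : ∀ (i n : ℕ), i ≤ n + 1 →
    ∑ j ∈ Finset.Icc i n, (f j - f (j + 1)) = f i - f (n + 1) := by
  intro i n
  induction n with
  | zero =>
    intro hi
    interval_cases i <;> simp
  | succ n ih =>
    intro hi
    rcases Nat.lt_or_ge i (n + 2) with h | h
    · rw [Finset.sum_Icc_succ_top (by omega), ih (by omega)]
      ring
    · have : i = n + 2 := by omega
      subst this
      rw [Finset.Icc_eq_empty_of_lt (Nat.lt_succ_self (n + 1))]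
      simp

lemma exp_half_log {t : ℝ} (ht : 0 < t) :
    Complex.exp ((Real.log t : ℂ) / 2) = ((Real.sqrt t : ℝ) : ℂ) := by
  rw [show ((Real.log t : ℂ))/2 = ((Real.log t / 2 : ℝ) : ℂ) by push_cast; ring,
     ← Real.log_sqrt ht.le, ← Complex.ofReal_exp, Real.exp_log (Real.sqrt_pos.mpr ht)]

end SzegoGapAux

open SzegoGapAux Complex Filter Finset in
theorem szegoDGap_expansion_at_xp
    (m p : ℕ) (hm : 1 ≤ m) (hp : 1 ≤ p) (hpm : p ≤ m) (x s : ℕ → ℝ)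
    (hx : ∀ j, j < m → x j < x (j + 1))
    (hs : ∀ j, 1 ≤ j → j ≤ m → j ≠ p → 0 < s j)
    (hs0 : s 0 = 1) (hsm : s (m + 1) = 1) :
    Filter.Tendsto
      (fun z : ℂ => (szegoDGap m p x s z - ↑(Real.sqrt (s (p + 1)))) / csqrt (z - ↑(x p)))
      (nhdsWithin (↑(x p)) {z : ℂ | 0 < z.im})
      (nhds (-2 * ↑(Real.sqrt (s (p + 1))) *
          (∑ j ∈ (Finset.Icc 0 m).filter (fun j => j ≠ p - 1 ∧ j ≠ p),
            betaCoef s j * ↑(Real.sqrt |x j - x (p - 1)| / Real.sqrt |x j - x p|)) /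
          ↑(Real.sqrt (x p - x (p - 1))))) := by
  have hab : x (p - 1) < x p := xmono hx (p - 1) p hpm (by omega)
  set a := x (p - 1) with ha
  set b := x p with hb
  set S : ℂ := ((Real.sqrt (b - a) : ℝ) : ℂ) with hS
  have hS0 : S ≠ 0 := sqrtba_ne hab
  have hspos : ∀ j, p + 1 ≤ j → j ≤ m + 1 → 0 < s j := by
    intro j h1 h2
    rcases Nat.lt_or_ge j (m + 1) with h | h
    · exact hs j (by omega) (by omega) (by omega)
    · have hj : j = m + 1 := by omega
      rw [hj, hsm]; norm_num
  have hsp1 : 0 < s (p + 1) := hspos (p + 1) le_rfl (by omega)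
  have hlowa : ∀ j, j ∈ Finset.range (p - 1) → x j < a := by
    intro j hj; rw [Finset.mem_range] at hj
    exact xmono hx j (p - 1) (by omega) hj
  have hhighb : ∀ j, j ∈ Finset.Icc (p + 1) m → b < x j := by
    intro j hj; rw [Finset.mem_Icc] at hj
    exact xmono hx p j hj.2 (by omega)
  set F : ℂ → ℂ := fun w =>
    (∑ j ∈ Finset.range (p - 1), betaCoef s j *
       Complex.log (gfun ((b:ℂ) - (a:ℂ)) (Real.sqrt (b - x j)) (Real.sqrt (a - x j)) w)) +
    (∑ j ∈ Finset.Icc (p + 1) m, betaCoef s j *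
       ((Real.pi : ℂ) * Complex.I +
         Complex.log (gfun ((b:ℂ) - (a:ℂ)) (Real.sqrt (x j - b)) (Real.sqrt (x j - a)) w)))
    with hF
  -- matching on the upper half-plane
  have hmatch : ∀ z : ℂ, 0 < z.im →
      szegoDGap m p x s z = Complex.exp (F (csqrt (z - (b:ℂ)))) := by
    intro z hz
    rw [szegoDGap, if_pos hz, hF]
    simp only []
    rw [Complex.exp_add, Complex.exp_sum, Complex.exp_sum]
    congr 1
    · apply Finset.prod_congr rfl
      intro j hj
      have hja : x j < a := hlowa j hj
      have hc : 0 < Real.sqrt (b - x j) := Real.sqrt_pos.mpr (by linarith)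
      have hd : 0 ≤ Real.sqrt (a - x j) := Real.sqrt_nonneg _
      have hR : Rlow a b (x j) z =
          gfun ((b:ℂ) - (a:ℂ)) (Real.sqrt (b - x j)) (Real.sqrt (a - x j))
            (csqrt (z - (b:ℂ))) := by
        rw [Rlow, gfun_eq hz]
      rw [← ha, ← hb, hR, Complex.cpow_def_of_ne_zero (gfun_ne hab hc hd hz), mul_comm]
    · apply Finset.prod_congr rfl
      intro j hj
      have hjb : b < x j := hhighb j hj
      have hc : 0 < Real.sqrt (x j - b) := Real.sqrt_pos.mpr (by linarith)
      have hd : 0 < Real.sqrt (x j - a) := Real.sqrt_pos.mpr (by linarith)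
      have hR : Rhigh a b (x j) z =
          -(gfun ((b:ℂ) - (a:ℂ)) (Real.sqrt (x j - b)) (Real.sqrt (x j - a))
            (csqrt (z - (b:ℂ)))) := by
        rw [Rhigh, gfun_eq hz, ← neg_div, neg_sub]
        ring_nf
      rw [← ha, ← hb, hR,
        Complex.cpow_def_of_ne_zero (neg_ne_zero.mpr (gfun_ne hab hc hd.le hz)),
        log_neg_of_im_neg (gfun_im_neg hab hc hd hz)]
      congr 1
      ring
  -- value at 0
  have hF0 : F 0 = (Real.log (s (p + 1)) : ℂ) / 2 := by
    rw [hF]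
    simp only []
    have h1 : ∀ j ∈ Finset.range (p - 1), betaCoef s j *
        Complex.log (gfun ((b:ℂ) - (a:ℂ)) (Real.sqrt (b - x j)) (Real.sqrt (a - x j)) 0)
          = 0 := by
      intro j hj
      have hja : x j < a := hlowa j hj
      rw [gfun_zero hab (Real.sqrt_pos.mpr (by linarith)) _, Complex.log_one, mul_zero]
    have h2 : ∀ j ∈ Finset.Icc (p + 1) m, betaCoef s j *
        ((Real.pi : ℂ) * Complex.I +
          Complex.log (gfun ((b:ℂ) - (a:ℂ)) (Real.sqrt (x j - b)) (Real.sqrt (x j - a)) 0))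
        = (Real.log (s j) : ℂ) / 2 - (Real.log (s (j + 1)) : ℂ) / 2 := by
      intro j hj
      rw [Finset.mem_Icc] at hj
      have hjb : b < x j := hhighb j (Finset.mem_Icc.mpr hj)
      rw [gfun_zero hab (Real.sqrt_pos.mpr (by linarith)) _, Complex.log_one, add_zero,
        betaCoef]
      have hlog : Real.log (s j / s (j + 1)) = Real.log (s j) - Real.log (s (j + 1)) :=
        Real.log_div (hspos j (by omega) (by omega)).ne'
          (hspos (j + 1) (by omega) (by omega)).ne'
      rw [hlog]
      have hpi : (Real.pi : ℂ) ≠ 0 := by exact_mod_cast Real.pi_ne_zero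
      push_cast
      field_simp
    rw [Finset.sum_eq_zero h1, zero_add, Finset.sum_congr rfl h2,
      tele (fun j => (Real.log (s j) : ℂ) / 2) (p + 1) m (by omega), hsm]
    simp [Real.log_one]
  have hexpF0 : Complex.exp (F 0) = ((Real.sqrt (s (p + 1)) : ℝ) : ℂ) := by
    rw [hF0]; exact exp_half_log hsp1
  -- derivative at 0
  set D1 : ℂ :=
    (∑ j ∈ Finset.range (p - 1), betaCoef s j *
        (-2 * ((Real.sqrt (a - x j) : ℝ) : ℂ) / (S * ((Real.sqrt (b - x j) : ℝ) : ℂ)))) +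
    (∑ j ∈ Finset.Icc (p + 1) m, betaCoef s j *
        (-2 * ((Real.sqrt (x j - a) : ℝ) : ℂ) / (S * ((Real.sqrt (x j - b) : ℝ) : ℂ))))
    with hD1
  have hFderiv : HasDerivAt F D1 0 := by
    rw [hF, hD1]
    apply HasDerivAt.add
    · apply HasDerivAt.fun_sum
      intro j hj
      have hja : x j < a := hlowa j hj
      exact (gfun_log_hasDerivAt hab _ (Real.sqrt_pos.mpr (by linarith))).const_mul _
    · apply HasDerivAt.fun_sum
      intro j hj
      have hjb : b < x j := hhighb j hj
      exact ((gfun_log_hasDerivAt hab _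
        (Real.sqrt_pos.mpr (by linarith))).const_add _).const_mul _
  have hf : HasDerivAt (fun w => Complex.exp (F w)) (Complex.exp (F 0) * D1) 0 :=
    hFderiv.cexp
  have hslope : Filter.Tendsto (fun w : ℂ => (Complex.exp (F w) - Complex.exp (F 0)) / w)
      (nhdsWithin (0:ℂ) {(0:ℂ)}ᶜ) (nhds (Complex.exp (F 0) * D1)) := by
    have h := hasDerivAt_iff_tendsto_slope.mp hf
    rw [slope_fun_def_field] at h
    simpa using h
  have hphi : Filter.Tendsto (fun z : ℂ => csqrt (z - (b:ℂ)))
      (nhdsWithin ((b:ℝ) : ℂ) {z : ℂ | 0 < z.im}) (nhdsWithin (0:ℂ) {(0:ℂ)}ᶜ) := by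
    rw [tendsto_nhdsWithin_iff]
    constructor
    · have h1 : ContinuousAt (fun pp : ℂ × ℂ => pp.1 ^ pp.2) (0, (1:ℂ)/2) :=
        Complex.continuousAt_cpow_zero_of_re_pos (by norm_num)
      have h2 : ContinuousAt (fun z : ℂ => ((z - (b:ℂ), (1:ℂ)/2) : ℂ × ℂ)) ((b:ℝ):ℂ) := by
        fun_prop
      have h3 : ContinuousAt (fun z : ℂ => csqrt (z - (b:ℂ))) ((b:ℝ):ℂ) := by
        have := ContinuousAt.comp (g := fun pp : ℂ × ℂ => pp.1 ^ pp.2) (by simpa using h1) h2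
        simpa [csqrt, Function.comp_def] using this
      have h4 : csqrt (((b:ℝ):ℂ) - (b:ℂ)) = 0 := by
        rw [sub_self, csqrt, Complex.zero_cpow (by norm_num)]
      have := h3.tendsto
      rw [h4] at this
      exact this.mono_left nhdsWithin_le_nhds
    · filter_upwards [self_mem_nhdsWithin] with z hz
      have hz' : 0 < z.im := hz
      show csqrt (z - (b:ℂ)) ∈ ({(0:ℂ)}ᶜ : Set ℂ)
      simp only [Set.mem_compl_iff, Set.mem_singleton_iff, csqrt_eq_zero_iff]
      exact sub_ofReal_ne_zero hz' b
  have hcomp := hslope.comp hphi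
  -- the limit value
  have hsplit : (Finset.Icc 0 m).filter (fun j => j ≠ p - 1 ∧ j ≠ p) =
      Finset.range (p - 1) ∪ Finset.Icc (p + 1) m := by
    ext j
    simp only [Finset.mem_filter, Finset.mem_Icc, Finset.mem_union, Finset.mem_range]
    omega
  have hdisj : Disjoint (Finset.range (p - 1)) (Finset.Icc (p + 1) m) := by
    rw [Finset.disjoint_left]
    intro j hj hj'
    rw [Finset.mem_range] at hj
    rw [Finset.mem_Icc] at hj'
    omega
  have hlowterm : ∀ j ∈ Finset.range (p - 1),
      betaCoef s j *
        (-2 * ((Real.sqrt (a - x j) : ℝ) : ℂ) / (S * ((Real.sqrt (b - x j) : ℝ) : ℂ)))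
      = (-2 / S) * (betaCoef s j *
          ((Real.sqrt |x j - a| / Real.sqrt |x j - b| : ℝ) : ℂ)) := by
    intro j hj
    have hja : x j < a := hlowa j hj
    have hjb : x j < b := lt_trans hja hab
    rw [abs_of_neg (by linarith : x j - a < 0), abs_of_neg (by linarith : x j - b < 0),
      neg_sub, neg_sub]
    have hcb : ((Real.sqrt (b - x j) : ℝ) : ℂ) ≠ 0 := by
      exact_mod_cast (Real.sqrt_pos.mpr (by linarith : (0:ℝ) < b - x j)).ne'
    push_cast
    field_simp
  have hhighterm : ∀ j ∈ Finset.Icc (p + 1) m,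
      betaCoef s j *
        (-2 * ((Real.sqrt (x j - a) : ℝ) : ℂ) / (S * ((Real.sqrt (x j - b) : ℝ) : ℂ)))
      = (-2 / S) * (betaCoef s j *
          ((Real.sqrt |x j - a| / Real.sqrt |x j - b| : ℝ) : ℂ)) := by
    intro j hj
    have hjb : b < x j := hhighb j hj
    have hja : a < x j := lt_trans hab hjb
    rw [abs_of_pos (by linarith : (0:ℝ) < x j - a), abs_of_pos (by linarith : (0:ℝ) < x j - b)]
    have hcb : ((Real.sqrt (x j - b) : ℝ) : ℂ) ≠ 0 := by
      exact_mod_cast (Real.sqrt_pos.mpr (by linarith : (0:ℝ) < x j - b)).ne'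
    push_cast
    field_simp
  have hval : Complex.exp (F 0) * D1 =
      -2 * ((Real.sqrt (s (p + 1)) : ℝ) : ℂ) *
        (∑ j ∈ (Finset.Icc 0 m).filter (fun j => j ≠ p - 1 ∧ j ≠ p),
          betaCoef s j * ((Real.sqrt |x j - a| / Real.sqrt |x j - b| : ℝ) : ℂ)) / S := by
    rw [hexpF0, hD1, hsplit, Finset.sum_union hdisj,
      Finset.sum_congr rfl hlowterm, Finset.sum_congr rfl hhighterm,
      ← Finset.mul_sum, ← Finset.mul_sum]
    field_simp
    ring
  rw [hval] at hcomp
  apply Filter.Tendsto.congr' _ hcomp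
  filter_upwards [self_mem_nhdsWithin] with z hz
  have hz' : 0 < z.im := hz
  show (fun w : ℂ => (Complex.exp (F w) - Complex.exp (F 0)) / w) (csqrt (z - (b:ℂ)))
      = (szegoDGap m p x s z - ((Real.sqrt (s (p + 1)) : ℝ) : ℂ)) / csqrt (z - (b:ℂ))
  simp only []
  rw [hmatch z hz', hexpF0]
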